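/- With A₁ = [[0,0],[0,1/3]], A = diag(-1/3,0,0,1/3), B the symmetric matrix with B₁₁ = -1/6, B₂₂ = B₃₃ = 1/6, B₂₃ = B₃₂ = 1/3, B₄₄ = -1/6, and C the strictly lower-triangular matrix with C₂₁ = -1/3, C₃₁ = 1/3, C₄₂ = -1/3, C₄₃ = 1/3 (all other entries 0), one has [A,B] = 0, [A,C] = (1/3)C, and [B,C] = 0; moreover C is nilpotent with C³ = 0, C² ≠ 0. -/

import Mathlib

open Matrix

noncomputable def A1_12 : Matrix (Fin 2) (Fin 2) ℝ := !![0,0; 0,1/3]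

noncomputable def A12 : Matrix (Fin 4) (Fin 4) ℝ :=
  !![-(1/3),0,0,0; 0,0,0,0; 0,0,0,0; 0,0,0,1/3]

noncomputable def B12 : Matrix (Fin 4) (Fin 4) ℝ :=
  !![-(1/6),0,0,0; 0,1/6,1/3,0; 0,1/3,1/6,0; 0,0,0,-(1/6)]

noncomputable def C12 : Matrix (Fin 4) (Fin 4) ℝ :=
  !![0,0,0,0; -(1/3),0,0,0; 1/3,0,0,0; 0,-(1/3),1/3,0]

/-- for the matrices of Example M2, `[A,B] = 0`, `[A,C] = (1/3)C`,
`[B,C] = 0`, and `C` is nilpotent with `C³ = 0`, `C² ≠ 0`. -/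
theorem stmt12 :
    A12 * B12 - B12 * A12 = 0 ∧
    A12 * C12 - C12 * A12 = (1/3 : ℝ) • C12 ∧
    B12 * C12 - C12 * B12 = 0 ∧
    C12 ^ 3 = 0 ∧ C12 ^ 2 ≠ 0 := by
  refine ⟨?_, ?_, ?_, ?_, ?_⟩
  · simp [A12, B12]; ext i j; fin_cases i <;> fin_cases j <;> norm_num
  · simp [A12, C12]; ext i; fin_cases i; norm_num [Matrix.smul_apply]
  · simp [B12, C12]; ext i j; fin_cases i <;> fin_cases j <;> norm_num
  · rw [pow_succ, pow_succ, pow_one]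
    simp [C12]; ext i j; fin_cases i <;> fin_cases j <;> norm_num
  · intro h
    rw [pow_two] at h
    have := congrFun (congrFun h 3) 0
    simp [C12, Matrix.mul_apply, Fin.sum_univ_four] at this
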